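/- Let K be a 3-uniform hypergraph on a vertex set V, let δ ∈ (0, 1/10), and suppose V'' ⊆ V has |V''| > 3δ|V|, every pair of distinct vertices in V'' is active in K, and every active pair uv of K satisfies |N_K(u,v)| ≥ (1-δ)|V|. Then for any two edges e = xyz and e' = x'y'z' of K with all vertices in V'', there is a pseudo-path in K using only vertices of V'' ∪ (e ∪ e') connecting e and e'. In particular, K restricted to V'' has a single connected component containing all edges induced on V''. -/

import Mathlib

/-!
Any two vertex pairs `uv`, `u'v'` of `V''` have a common neighbour `w ∈ V''`: each codegree
set misses at most `δ|V|` vertices, so together they miss at most `2δ|V| < |V''|` vertices of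
`V''`. Consequently two edges of `K` inside `V''` through a common vertex `a`, say `ayz` and
`ay'z'`, are joined by the pseudo-path `ayz, ayw, ay'w, ay'z'` with `w` a common neighbour of
`ay` and `ay'`; and two arbitrary edges through `x` and `x'` are both joined to an edge `xx'w`
inside `V''`.
-/

open Finset
open scoped Classical

/-- The codegree set `N_K(u,v)`. -/
noncomputable def codegSet {V : Type*} [Fintype V] [DecidableEq V]
    (K : Finset (Finset V)) (u v : V) : Finset V :=
  Finset.univ.filter (fun w => ({u, v, w} : Finset V) ∈ K)

theorem List.exists_isChain_of_reflTransGen {α : Type*} {r : α → α → Prop} {P : α → Prop}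
    {a b : α} (h : Relation.ReflTransGen r a b) (ha : P a) (hr : ∀ x y, r x y → P y) :
    ∃ l : List α, l ≠ [] ∧ l.head? = some a ∧ l.getLast? = some b ∧ (∀ x ∈ l, P x) ∧
      l.IsChain r := by
  obtain ⟨l, hl, hchain, hhead, hlast⟩ := List.exists_isChain_ne_nil_of_relationReflTransGen h
  refine ⟨l, hl, by rw [List.head?_eq_some_head hl, hhead],
    by rw [List.getLast?_eq_some_getLast hl, hlast],
    hchain.induction P l (fun x y hxy _ => hr x y hxy) (fun _ => hhead ▸ ha), hchain⟩

theorem Finset.card_add_card_add_card_le_card_inter_inter {α : Type*} [Fintype α]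
    [DecidableEq α] (A B S : Finset α) :
    S.card + A.card + B.card ≤ (A ∩ B ∩ S).card + 2 * Fintype.card α := by
  have hcover : S ⊆ A ∩ B ∩ S ∪ Aᶜ ∪ Bᶜ := by
    intro x
    simp only [mem_union, mem_inter, mem_compl]
    tauto
  have h1 := card_le_card hcover
  have h2 := card_union_le (A ∩ B ∩ S ∪ Aᶜ) Bᶜ
  have h3 := card_union_le (A ∩ B ∩ S) Aᶜ
  have hA := card_add_card_compl A
  have hB := card_add_card_compl B
  omega

theorem Finset.ne_of_card_eq_three {α : Type*} [DecidableEq α] {a b c : α}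
    (h : ({a, b, c} : Finset α).card = 3) : c ≠ a := by
  rintro rfl
  have hcb : ({c, b, c} : Finset α) = {b, c} := by
    ext
    simp only [mem_insert, mem_singleton]
    tauto
  rw [hcb] at h
  have := card_le_two (a := b) (b := c)
  omega

section PseudoPaths

variable {V : Type*} [DecidableEq V]

theorem card_inter_eq_two_of_pair_subset {g h : Finset V} (hg : g.card = 3) (hh : h.card = 3)
    (hne : g ≠ h) {a b : V} (hab : a ≠ b) (ha : a ∈ g ∩ h) (hb : b ∈ g ∩ h) :
    (g ∩ h).card = 2 := by
  have hlt : (g ∩ h).card < 3 := by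
    rw [← hg]
    refine card_lt_card (ssubset_of_subset_of_ne inter_subset_left fun hgh => hne ?_)
    exact eq_of_subset_of_card_le (hgh ▸ inter_subset_right) (by rw [hg, hh])
  have hle : 2 ≤ (g ∩ h).card := by
    rw [← card_pair hab]
    exact card_le_card (insert_subset ha (singleton_subset_iff.mpr hb))
  omega

/-- Consecutive edges `g, h` of a pseudo-path of `K` inside `S`; only `h` is constrained, the
first edge of a path being checked separately. -/
def PseudoStep (K : Finset (Finset V)) (S : Finset V) (g h : Finset V) : Prop :=
  (g ∩ h).card = 2 ∧ h ∈ K ∧ h ⊆ S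

def HasCommonNeighbours (K : Finset (Finset V)) (S : Finset V) : Prop :=
  ∀ u ∈ S, ∀ v ∈ S, ∀ u' ∈ S, ∀ v' ∈ S, u ≠ v → u' ≠ v' →
    ∃ w ∈ S, ({u, v, w} : Finset V) ∈ K ∧ ({u', v', w} : Finset V) ∈ K

variable {K : Finset (Finset V)} (h3 : ∀ e ∈ K, e.card = 3) {S : Finset V}
include h3

theorem reflTransGen_pseudoStep_of_pair_subset {g h : Finset V} (hg : g ∈ K) (hh : h ∈ K)
    (hhS : h ⊆ S) {a b : V} (hab : a ≠ b) (ha : a ∈ g ∩ h) (hb : b ∈ g ∩ h) :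
    Relation.ReflTransGen (PseudoStep K S) g h := by
  by_cases hgh : g = h
  · exact hgh ▸ Relation.ReflTransGen.refl
  · exact .single ⟨card_inter_eq_two_of_pair_subset (h3 g hg) (h3 h hh) hgh hab ha hb, hh, hhS⟩

theorem reflTransGen_pseudoStep_of_mem_inter (hS : HasCommonNeighbours K S) {g h : Finset V}
    (hg : g ∈ K) (hgS : g ⊆ S) (hh : h ∈ K) (hhS : h ⊆ S) {a : V} (ha : a ∈ g ∩ h) :
    Relation.ReflTransGen (PseudoStep K S) g h := by
  rw [mem_inter] at ha
  obtain ⟨y, hy, hya⟩ := exists_mem_ne (by rw [h3 g hg]; norm_num) a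
  obtain ⟨y', hy', hy'a⟩ := exists_mem_ne (by rw [h3 h hh]; norm_num) a
  obtain ⟨w, hw, hayw, hay'w⟩ :=
    hS a (hgS ha.1) y (hgS hy) a (hhS ha.2) y' (hhS hy') (Ne.symm hya) (Ne.symm hy'a)
  have hwa : w ≠ a := ne_of_card_eq_three (h3 _ hayw)
  have haywS : ({a, y, w} : Finset V) ⊆ S := by
    simp only [insert_subset_iff, singleton_subset_iff]; exact ⟨hgS ha.1, hgS hy, hw⟩
  have hay'wS : ({a, y', w} : Finset V) ⊆ S := by
    simp only [insert_subset_iff, singleton_subset_iff]; exact ⟨hgS ha.1, hhS hy', hw⟩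
  have hstart := reflTransGen_pseudoStep_of_pair_subset h3 hg hayw haywS (Ne.symm hya)
    (mem_inter.mpr ⟨ha.1, by simp⟩) (mem_inter.mpr ⟨hy, by simp⟩)
  have hmiddle := reflTransGen_pseudoStep_of_pair_subset h3 hayw hay'w hay'wS hwa.symm
    (by simp) (by simp)
  have hend := reflTransGen_pseudoStep_of_pair_subset h3 hay'w hh hhS (Ne.symm hy'a)
    (mem_inter.mpr ⟨by simp, ha.2⟩) (mem_inter.mpr ⟨by simp, hy'⟩)
  exact hstart.trans (hmiddle.trans hend)

theorem reflTransGen_pseudoStep (hS : HasCommonNeighbours K S) {g h : Finset V}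
    (hg : g ∈ K) (hgS : g ⊆ S) (hh : h ∈ K) (hhS : h ⊆ S) :
    Relation.ReflTransGen (PseudoStep K S) g h := by
  obtain ⟨x, hx⟩ := card_pos.mp (by rw [h3 g hg]; norm_num : 0 < g.card)
  obtain ⟨x', hx'⟩ := card_pos.mp (by rw [h3 h hh]; norm_num : 0 < h.card)
  by_cases hxx' : x = x'
  · exact reflTransGen_pseudoStep_of_mem_inter h3 hS hg hgS hh hhS
      (mem_inter.mpr ⟨hx, hxx' ▸ hx'⟩)
  obtain ⟨w, hw, hf, -⟩ := hS x (hgS hx) x' (hhS hx') x (hgS hx) x' (hhS hx') hxx' hxx'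
  have hfS : ({x, x', w} : Finset V) ⊆ S := by
    simp only [insert_subset_iff, singleton_subset_iff]; exact ⟨hgS hx, hhS hx', hw⟩
  exact (reflTransGen_pseudoStep_of_mem_inter h3 hS hg hgS hf hfS
    (mem_inter.mpr ⟨hx, by simp⟩)).trans
    (reflTransGen_pseudoStep_of_mem_inter h3 hS hf hfS hh hhS (mem_inter.mpr ⟨by simp, hx'⟩))

end PseudoPaths

theorem mem_codegSet {V : Type*} [Fintype V] [DecidableEq V] {K : Finset (Finset V)}
    {u v w : V} : w ∈ codegSet K u v ↔ ({u, v, w} : Finset V) ∈ K := by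
  simp [codegSet]

theorem hasCommonNeighbours_of_codegree {V : Type*} [Fintype V] [DecidableEq V]
    {K : Finset (Finset V)} {δ : ℝ} {S : Finset V}
    (hbig : (S.card : ℝ) > 3 * δ * (Fintype.card V))
    (hactive : ∀ u ∈ S, ∀ v ∈ S, u ≠ v → (codegSet K u v).Nonempty)
    (hcodeg : ∀ u v : V, u ≠ v → (codegSet K u v).Nonempty →
      ((codegSet K u v).card : ℝ) ≥ (1 - δ) * (Fintype.card V)) :
    HasCommonNeighbours K S := by
  intro u hu v hv u' hu' v' hv' huv hu'v'
  have hcount := card_add_card_add_card_le_card_inter_inter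
    (codegSet K u v) (codegSet K u' v') S
  have hA := hcodeg u v huv (hactive u hu v hv huv)
  have hB := hcodeg u' v' hu'v' (hactive u' hu' v' hv' hu'v')
  have hpos : (0 : ℝ) < (codegSet K u v ∩ codegSet K u' v' ∩ S).card := by
    have := (Nat.cast_le (α := ℝ)).mpr hcount
    push_cast at this
    linarith [(S.card.cast_nonneg : (0 : ℝ) ≤ S.card)]
  obtain ⟨w, hw⟩ := card_pos.mp (by exact_mod_cast hpos)
  simp only [mem_inter, mem_codegSet] at hw
  exact ⟨w, hw.2, hw.1.1, hw.1.2⟩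

theorem pseudo_path_inside_good_set_general {V : Type*} [Fintype V] [DecidableEq V]
    (K : Finset (Finset V)) (h3 : ∀ e ∈ K, e.card = 3)
    (δ : ℝ)
    (V'' : Finset V)
    (hbig : (V''.card : ℝ) > 3 * δ * (Fintype.card V))
    (hactive : ∀ u ∈ V'', ∀ v ∈ V'', u ≠ v → (codegSet K u v).Nonempty)
    (hcodeg : ∀ u v : V, u ≠ v → (codegSet K u v).Nonempty →
      ((codegSet K u v).card : ℝ) ≥ (1 - δ) * (Fintype.card V)) :
    ∀ e ∈ K, ∀ e' ∈ K, e ⊆ V'' → e' ⊆ V'' →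
      ∃ p : List (Finset V), p ≠ [] ∧ p.head? = some e ∧ p.getLast? = some e' ∧
        (∀ g ∈ p, g ∈ K ∧ g ⊆ V'' ∪ e ∪ e') ∧
        p.Chain' (fun a b => (a ∩ b).card = 2) := by
  intro e he e' he' heV heV'
  have hconn := reflTransGen_pseudoStep h3
    (hasCommonNeighbours_of_codegree hbig hactive hcodeg) he heV he' heV'
  obtain ⟨p, hp, hhead, hlast, hmem, hchain⟩ :=
    List.exists_isChain_of_reflTransGen (P := fun g => g ∈ K ∧ g ⊆ V'') hconn ⟨he, heV⟩
      fun _ _ hstep => hstep.2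
  exact ⟨p, hp, hhead, hlast,
    fun g hg => ⟨(hmem g hg).1, (hmem g hg).2.trans (subset_union_left.trans subset_union_left)⟩,
    hchain.imp fun _ _ hstep => hstep.1⟩

/-- If `V'' ⊆ V` has `|V''| > 3δ|V|` (with `0 < δ < 1/10`), every pair of
distinct vertices of `V''` is active in `K`, and every active pair of `K` has codegree
at least `(1-δ)|V|`, then any two edges `e, e'` of `K` contained in `V''` are connected
by a pseudo-path of `K` all of whose edges use only vertices of `V'' ∪ e ∪ e'`. -/
theorem pseudo_path_inside_good_set {V : Type*} [Fintype V] [DecidableEq V]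
    (K : Finset (Finset V)) (h3 : ∀ e ∈ K, e.card = 3)
    (δ : ℝ) (hδ0 : 0 < δ) (hδ1 : δ < 1 / 10)
    (V'' : Finset V)
    (hbig : (V''.card : ℝ) > 3 * δ * (Fintype.card V))
    (hactive : ∀ u ∈ V'', ∀ v ∈ V'', u ≠ v → (codegSet K u v).Nonempty)
    (hcodeg : ∀ u v : V, u ≠ v → (codegSet K u v).Nonempty →
      ((codegSet K u v).card : ℝ) ≥ (1 - δ) * (Fintype.card V)) :
    ∀ e ∈ K, ∀ e' ∈ K, e ⊆ V'' → e' ⊆ V'' →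
      ∃ p : List (Finset V), p ≠ [] ∧ p.head? = some e ∧ p.getLast? = some e' ∧
        (∀ g ∈ p, g ∈ K ∧ g ⊆ V'' ∪ e ∪ e') ∧
        p.Chain' (fun a b => (a ∩ b).card = 2) :=
  pseudo_path_inside_good_set_general K h3 δ V'' hbig hactive hcodeg
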